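/- arXiv:2005.01859 — 3 statements merged into one kernel-verified Lean document; each statement's English description precedes it below -/
import Mathlib

section
/- Define f : ℝ → ℝ by f(v) = S₀(1 − e^{−βv}) − αv and set R₀ := S₀β/α. Then: (a) f(0) = 0 and f′(0) = α(R₀ − 1); (b) f is strictly concave on ℝ; (c) f(v) → −∞ as v → +∞; (d) if R₀ > 1 there exists a unique v* > 0 with f(v*) = 0, and f > 0 on (0, v*) while f < 0 on (v*, ∞); (e) if R₀ ≤ 1 then f < 0 on (0, ∞); (f) for every s > 0 and every k > 1 one has f(ks) < k f(s). -/
open Real Filter Set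

/-! Since `f` is strictly concave with `f 0 = 0`, the secant slope `f v / v` is strictly
decreasing on `(0, ∞)` and lies below `f'(0) = S₀β - α = α(R₀ - 1)`. Parts (d)–(f) are sign
statements about this slope: if `R₀ ≤ 1` it is negative throughout; if `R₀ > 1` it is positive
near `0`, while `f → -∞` forces a zero, which the monotonicity of the slope makes unique. -/

section

variable {f : ℝ → ℝ}

theorem StrictConcaveOn.strictAntiOn_slope {S : Set ℝ} (hf : StrictConcaveOn ℝ S f) {a : ℝ}
    (ha : a ∈ S) : StrictAntiOn (slope f a) (S \ {a}) := fun x hx y hy hxy => by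
  simpa only [slope_def_field] using hf.secant_strict_mono ha hx.1 hy.1 hx.2 hy.2 hxy

theorem exists_pos_map_pos_of_hasDerivAt {d : ℝ} (h0 : f 0 = 0) (hd : HasDerivAt f d 0)
    (hd₀ : 0 < d) : ∃ x > 0, 0 < f x := by
  obtain ⟨x, hx, hx₀⟩ := ((hd.tendsto_slope_zero_right.eventually (eventually_gt_nhds hd₀)).and
    self_mem_nhdsWithin).exists
  refine ⟨x, hx₀, ?_⟩
  simpa [h0, hx₀] using hx

theorem exists_pos_map_eq_zero {d : ℝ} (hc : ContinuousOn f (Ici 0)) (h0 : f 0 = 0)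
    (hd : HasDerivAt f d 0) (hd₀ : 0 < d) (htop : Tendsto f atTop atBot) : ∃ r > 0, f r = 0 := by
  obtain ⟨x, hx₀, hfx⟩ := exists_pos_map_pos_of_hasDerivAt h0 hd hd₀
  obtain ⟨M, hfM, hxM⟩ :=
    ((htop.eventually (eventually_lt_atBot 0)).and (eventually_gt_atTop x)).exists
  obtain ⟨r, hr, hfr⟩ := intermediate_value_Icc' hxM.le
    (hc.mono fun y hy => hx₀.le.trans hy.1) ⟨hfM.le, hfx.le⟩
  exact ⟨r, hx₀.trans_le hr.1, hfr⟩

namespace StrictConcaveOn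

theorem div_strictAntiOn_Ioi (hf : StrictConcaveOn ℝ (Ici 0) f) (h0 : f 0 = 0) :
    StrictAntiOn (fun x => f x / x) (Ioi 0) := fun x hx y hy hxy => by
  simpa [slope_def_field, h0] using
    hf.strictAntiOn_slope self_mem_Ici ⟨mem_Ici.2 hx.le, hx.ne'⟩ ⟨mem_Ici.2 hy.le, hy.ne'⟩ hxy

theorem map_mul_lt_mul_map (hf : StrictConcaveOn ℝ (Ici 0) f) (h0 : f 0 = 0) {s k : ℝ}
    (hs : 0 < s) (hk : 1 < k) : f (k * s) < k * f s := by
  have hks : 0 < k * s := by positivity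
  calc f (k * s) < f s / s * (k * s) :=
        (div_lt_iff₀ hks).1 <| hf.div_strictAntiOn_Ioi h0 hs hks (lt_mul_of_one_lt_left hs hk)
    _ = k * f s := by field_simp

theorem pos_of_map_eq_zero_of_mem_Ioo (hf : StrictConcaveOn ℝ (Ici 0) f) (h0 : f 0 = 0)
    {r v : ℝ} (hfr : f r = 0) (hv : v ∈ Ioo 0 r) : 0 < f v := by
  have h : f r / r < f v / v := hf.div_strictAntiOn_Ioi h0 hv.1 (hv.1.trans hv.2) hv.2
  rw [hfr, zero_div] at h
  exact (div_pos_iff_of_pos_right hv.1).1 h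

theorem neg_of_map_eq_zero_of_lt (hf : StrictConcaveOn ℝ (Ici 0) f) (h0 : f 0 = 0)
    {r v : ℝ} (hr : 0 < r) (hfr : f r = 0) (hv : r < v) : f v < 0 := by
  have h : f v / v < f r / r := hf.div_strictAntiOn_Ioi h0 hr (hr.trans hv) hv
  rw [hfr, zero_div] at h
  exact neg_of_div_neg_left h (hr.trans hv).le

theorem neg_of_hasDerivAt_nonpos (hf : StrictConcaveOn ℝ (Ici 0) f) (h0 : f 0 = 0)
    {d v : ℝ} (hd : HasDerivAt f d 0) (hd₀ : d ≤ 0) (hv : 0 < v) : f v < 0 := by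
  have h := hf.slope_lt_of_hasDerivAt self_mem_Ici hv.le hv hd
  rw [slope_def_field, h0, sub_zero, sub_zero] at h
  exact neg_of_div_neg_left (h.trans_le hd₀) hv.le

theorem exists_unique_pos_map_eq_zero (hf : StrictConcaveOn ℝ (Ici 0) f) (h0 : f 0 = 0)
    {d : ℝ} (hc : ContinuousOn f (Ici 0)) (hd : HasDerivAt f d 0) (hd₀ : 0 < d)
    (htop : Tendsto f atTop atBot) :
    ∃ r : ℝ, 0 < r ∧ f r = 0 ∧ (∀ w, 0 < w → f w = 0 → w = r) ∧
      (∀ v ∈ Ioo 0 r, 0 < f v) ∧ (∀ v ∈ Ioi r, f v < 0) := by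
  obtain ⟨r, hr, hfr⟩ := exists_pos_map_eq_zero hc h0 hd hd₀ htop
  have hpos : ∀ v ∈ Ioo 0 r, 0 < f v := fun v => hf.pos_of_map_eq_zero_of_mem_Ioo h0 hfr
  have hneg : ∀ v ∈ Ioi r, f v < 0 := fun v => hf.neg_of_map_eq_zero_of_lt h0 hr hfr
  refine ⟨r, hr, hfr, fun w hw hfw => ?_, hpos, hneg⟩
  rcases lt_trichotomy w r with hwr | rfl | hrw
  · exact absurd hfw (hpos w ⟨hw, hwr⟩).ne'
  · rfl
  · exact absurd hfw (hneg w hrw).ne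

end StrictConcaveOn

end

noncomputable def kppNonlinearity (S₀ α β v : ℝ) : ℝ := S₀ * (1 - exp (-β * v)) - α * v

theorem hasDerivAt_kppNonlinearity (S₀ α β v : ℝ) :
    HasDerivAt (kppNonlinearity S₀ α β) (S₀ * β * exp (-β * v) - α) v := by
  have h := ((((hasDerivAt_id v).const_mul (-β)).exp.const_sub 1).const_mul S₀).sub
    ((hasDerivAt_id v).const_mul α)
  exact h.congr_deriv (by simp only [id]; ring)

theorem hasDerivAt_kppNonlinearity_zero (S₀ α β : ℝ) :
    HasDerivAt (kppNonlinearity S₀ α β) (S₀ * β - α) 0 := by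
  simpa using hasDerivAt_kppNonlinearity S₀ α β 0

theorem continuous_kppNonlinearity (S₀ α β : ℝ) : Continuous (kppNonlinearity S₀ α β) :=
  continuous_iff_continuousAt.2 fun v => (hasDerivAt_kppNonlinearity S₀ α β v).continuousAt

theorem strictConcaveOn_kppNonlinearity {S₀ α β : ℝ} (hS₀ : 0 < S₀) (hβ : 0 < β) :
    StrictConcaveOn ℝ univ (kppNonlinearity S₀ α β) := by
  refine StrictAntiOn.strictConcaveOn_of_deriv convex_univ
    (continuous_kppNonlinearity S₀ α β).continuousOn fun x _ y _ hxy => ?_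
  rw [(hasDerivAt_kppNonlinearity S₀ α β x).deriv, (hasDerivAt_kppNonlinearity S₀ α β y).deriv]
  have := exp_lt_exp.2 (mul_lt_mul_of_neg_left hxy (neg_neg_of_pos hβ))
  gcongr

theorem tendsto_kppNonlinearity_atTop {S₀ α β : ℝ} (hS₀ : 0 ≤ S₀) (hα : 0 < α) :
    Tendsto (kppNonlinearity S₀ α β) atTop atBot := by
  refine tendsto_atBot_mono (fun v => ?_) <| tendsto_atBot_add_const_left _ S₀ <|
    tendsto_neg_atTop_atBot.comp (tendsto_id.const_mul_atTop hα)
  have := exp_pos (-β * v)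
  simp only [kppNonlinearity, Function.comp, id]
  nlinarith

/-- Basic properties of the nonlinearity
`f(v) = S₀(1 − e^{−βv}) − αv` with `R₀ := S₀β/α`:
(a) `f(0) = 0` and `f′(0) = α(R₀ − 1)`; (b) `f` is strictly concave on `ℝ`;
(c) `f(v) → −∞` as `v → +∞`; (d) if `R₀ > 1` there is a unique `v* > 0` with
`f(v*) = 0`, `f > 0` on `(0, v*)` and `f < 0` on `(v*, ∞)`;
(e) if `R₀ ≤ 1` then `f < 0` on `(0, ∞)`;
(f) for all `s > 0`, `k > 1`, `f(ks) < k f(s)`. -/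
theorem kpp_nonlinearity_properties
    (S₀ α β : ℝ) (hS₀ : 0 < S₀) (hα : 0 < α) (hβ : 0 < β) :
    let f : ℝ → ℝ := fun v => S₀ * (1 - Real.exp (-β * v)) - α * v
    let R₀ : ℝ := S₀ * β / α
    f 0 = 0 ∧ deriv f 0 = α * (R₀ - 1) ∧
    StrictConcaveOn ℝ Set.univ f ∧
    Tendsto f atTop atBot ∧
    (1 < R₀ → ∃ vs : ℝ, 0 < vs ∧ f vs = 0 ∧
      (∀ w, 0 < w → f w = 0 → w = vs) ∧
      (∀ v ∈ Set.Ioo (0:ℝ) vs, 0 < f v) ∧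
      (∀ v ∈ Set.Ioi vs, f v < 0)) ∧
    (R₀ ≤ 1 → ∀ v > (0:ℝ), f v < 0) ∧
    (∀ s > (0:ℝ), ∀ k > (1:ℝ), f (k * s) < k * f s) := by
  intro f R₀
  have h0 : f 0 = 0 := by simp [f]
  have hd : HasDerivAt f (S₀ * β - α) 0 := hasDerivAt_kppNonlinearity_zero S₀ α β
  have hconc : StrictConcaveOn ℝ univ f := strictConcaveOn_kppNonlinearity hS₀ hβ
  have hconc₀ : StrictConcaveOn ℝ (Ici 0) f := hconc.subset (subset_univ _) (convex_Ici 0)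
  have htop : Tendsto f atTop atBot := tendsto_kppNonlinearity_atTop hS₀.le hα
  refine ⟨h0, ?_, hconc, htop, fun hR => ?_, fun hR v hv => ?_,
    fun s hs k hk => hconc₀.map_mul_lt_mul_map h0 hs hk⟩
  · rw [hd.deriv]
    simp only [R₀]
    field_simp
  · exact hconc₀.exists_unique_pos_map_eq_zero h0 (continuous_kppNonlinearity S₀ α β).continuousOn
      hd (sub_pos.2 ((one_lt_div hα).1 hR)) htop
  · exact hconc₀.neg_of_hasDerivAt_nonpos h0 hd (sub_nonpos.2 ((div_le_one hα).1 hR)) hv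
end

section
/- Let D, d, μ, ν > 0 and m > 0. The algebraic system D a² = μ d b/(d b + ν), a² + b² = m/d, γ = μ/(d b + ν) admits exactly one solution (a, b, γ) with a > 0, b > 0, γ > 0; moreover, this solution satisfies a < √(m/d). -/
/-- Uniqueness of the root of the reduced equation. -/
lemma alg_sys_root_unique (D d μ ν M : ℝ)
    (hD : 0 < D) (hd : 0 < d) (hμ : 0 < μ) (hν : 0 < ν)
    (b1 b2 : ℝ) (hb1 : 0 < b1) (hb2 : 0 < b2)
    (h1 : D * (M - b1 ^ 2) * (d * b1 + ν) = μ * d * b1)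
    (h2 : D * (M - b2 ^ 2) * (d * b2 + ν) = μ * d * b2) : b1 = b2 := by
  have hP1 : 0 < d * b1 + ν := by positivity
  have hP2 : 0 < d * b2 + ν := by positivity
  have key : D * (d * b1 + ν) * (d * b2 + ν) * (b2 ^ 2 - b1 ^ 2)
      = μ * d * ν * (b1 - b2) := by
    linear_combination (d * b2 + ν) * h1 - (d * b1 + ν) * h2
  rcases lt_trichotomy b1 b2 with h | h | h
  · exfalso
    nlinarith [mul_pos (mul_pos (mul_pos hD hP1) hP2)
      (by nlinarith : (0:ℝ) < b2 ^ 2 - b1 ^ 2), mul_pos (mul_pos hμ hd) hν]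
  · exact h
  · exfalso
    nlinarith [mul_pos (mul_pos (mul_pos hD hP1) hP2)
      (by nlinarith : (0:ℝ) < b1 ^ 2 - b2 ^ 2), mul_pos (mul_pos hμ hd) hν]

/-- For `D, d, μ, ν, m > 0`, the algebraic system
`Da² = μdb/(db+ν)`, `a² + b² = m/d`, `γ = μ/(db+ν)` admits exactly one
positive solution `(a, b, γ)`, and this solution satisfies `a < √(m/d)`. -/
theorem algebraic_system_unique_solution
    (D d μ ν m : ℝ)
    (hD : 0 < D) (hd : 0 < d) (hμ : 0 < μ) (hν : 0 < ν) (hm : 0 < m) :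
    (∃! p : ℝ × ℝ × ℝ,
      (0 < p.1 ∧ 0 < p.2.1 ∧ 0 < p.2.2) ∧
      D * p.1 ^ 2 = μ * d * p.2.1 / (d * p.2.1 + ν) ∧
      p.1 ^ 2 + p.2.1 ^ 2 = m / d ∧
      p.2.2 = μ / (d * p.2.1 + ν)) ∧
    (∀ a b γ : ℝ, 0 < a → 0 < b → 0 < γ →
      D * a ^ 2 = μ * d * b / (d * b + ν) →
      a ^ 2 + b ^ 2 = m / d →
      γ = μ / (d * b + ν) →
      a < Real.sqrt (m / d)) := by
  set M : ℝ := m / d with hMdef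
  have hM : 0 < M := div_pos hm hd
  have hsM : 0 < Real.sqrt M := Real.sqrt_pos.mpr hM
  have hsq : Real.sqrt M ^ 2 = M := Real.sq_sqrt hM.le
  constructor
  · -- existence and uniqueness
    set f : ℝ → ℝ := fun b => D * (M - b ^ 2) * (d * b + ν) - μ * d * b with hfdef
    have hcont : ContinuousOn f (Set.Icc 0 (Real.sqrt M)) := by fun_prop
    have hf0 : 0 < f 0 := by
      simp only [hfdef]
      nlinarith [mul_pos (mul_pos hD hM) hν]
    have hfs : f (Real.sqrt M) < 0 := by
      simp only [hfdef, hsq]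
      nlinarith [mul_pos (mul_pos hμ hd) hsM]
    obtain ⟨c, hcmem, hfc⟩ :
        (0 : ℝ) ∈ f '' Set.Icc 0 (Real.sqrt M) :=
      intermediate_value_Icc' hsM.le hcont ⟨hfs.le, hf0.le⟩
    have hc0 : 0 < c := by
      rcases lt_or_eq_of_le hcmem.1 with h | h
      · exact h
      · exfalso; rw [← h] at hfc; linarith
    have hcs : c < Real.sqrt M := by
      rcases lt_or_eq_of_le hcmem.2 with h | h
      · exact h
      · exfalso; rw [h] at hfc; linarith
    have hc2 : c ^ 2 < M := by
      have := Real.sq_sqrt hM.le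
      nlinarith [hcmem.1, hsM]
    have hPc : 0 < d * c + ν := by positivity
    have heq : D * (M - c ^ 2) * (d * c + ν) = μ * d * c := by
      simp only [hfdef] at hfc; linarith
    set a : ℝ := Real.sqrt (M - c ^ 2) with hadef
    have ha : 0 < a := Real.sqrt_pos.mpr (by linarith)
    have ha2 : a ^ 2 = M - c ^ 2 := Real.sq_sqrt (by linarith)
    refine ⟨(a, c, μ / (d * c + ν)), ⟨⟨ha, hc0, by positivity⟩, ?_, by simp [ha2], rfl⟩, ?_⟩
    · rw [eq_div_iff (ne_of_gt hPc), ha2]; linarith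
    · rintro ⟨a', b', γ'⟩ ⟨⟨ha', hb', hγ'⟩, q1, q2, q3⟩
      simp only at ha' hb' hγ' q1 q2 q3 ⊢
      have hPb : 0 < d * b' + ν := by positivity
      have heq' : D * (M - b' ^ 2) * (d * b' + ν) = μ * d * b' := by
        rw [eq_div_iff (ne_of_gt hPb)] at q1
        have h3 : a' ^ 2 = M - b' ^ 2 := by linarith
        linear_combination q1 - D * (d * b' + ν) * h3
      have hb : b' = c := alg_sys_root_unique D d μ ν M hD hd hμ hν b' c hb' hc0 heq' heq
      have haa : a' = a := by
        have hsq2 : a' ^ 2 = a ^ 2 := by rw [ha2, ← hb]; linarith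
        have hz : (a' - a) * (a' + a) = 0 := by linear_combination hsq2
        rcases mul_eq_zero.mp hz with h | h
        · linarith
        · exfalso; nlinarith
      refine Prod.ext haa (Prod.ext ?_ ?_) <;> simp [hb, q3]
  · -- bound
    intro a b γ ha hb hγ _ h2 _
    have : a ^ 2 < M := by nlinarith
    exact (Real.lt_sqrt ha.le).mpr this
end

section
/- Let D, d, μ, ν > 0. For ζ > 0 and ε ∈ (0,1), the algebraic system D a² = μ d b(1+ε)/(d b(1+ε) + ν(1−ε)), a² + b² = ζ/d, γ = μ/(d b(1+ε) + ν(1−ε)) admits exactly one positive solution, denoted (a_*^{ζ,ε}, b_*^{ζ,ε}, γ_*^{ζ,ε}). Moreover, for any m > 0, as (ζ, ε) → (m, 0) one has (a_*^{ζ,ε}, b_*^{ζ,ε}, γ_*^{ζ,ε}) → (a_*, b_*, γ_*), where (a_*, b_*, γ_*) is the unique positive solution of D a² = μ d b/(d b + ν), a² + b² = m/d, γ = μ/(d b + ν). -/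
/-!
Write `q = ζ / d` and `φ_ε(b) = μ d b (1 + ε) / (d b (1 + ε) + ν (1 - ε))`. Once `b` is known, `a`
and `γ` are determined, so a positive solution is the same as a root `b > 0` of
`D (q - b²) = φ_ε(b)`. The left side is strictly decreasing and `φ_ε` is increasing on `[0, ∞)`,
so there is at most one root, and the intermediate value theorem on `[0, √q]` provides one.

For the limit, compare the root `b` with the unperturbed root `P` (with `q₀ = m / d`): by
monotonicity of `φ_0` we get `D P |b - P| ≤ D |q - q₀| + |φ_ε(b) - φ_0(b)| ≤ D |q - q₀| + 2 μ ε`,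
so `b → P`, and `a = √(q - b²)`, `γ` follow by continuity.
-/

open Set

namespace PerturbedSystem

def denom (d ν ε b : ℝ) : ℝ := d * b * (1 + ε) + ν * (1 - ε)

noncomputable def response (μ d ν ε b : ℝ) : ℝ := μ * d * b * (1 + ε) / denom d ν ε b

def IsSolution (D d μ ν ζ ε : ℝ) (p : ℝ × ℝ × ℝ) : Prop :=
  (0 < p.1 ∧ 0 < p.2.1 ∧ 0 < p.2.2) ∧ D * p.1 ^ 2 = response μ d ν ε p.2.1 ∧
    p.1 ^ 2 + p.2.1 ^ 2 = ζ / d ∧ p.2.2 = μ / denom d ν ε p.2.1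

noncomputable def solutionOf (d μ ν ζ ε b : ℝ) : ℝ × ℝ × ℝ :=
  (√(ζ / d - b ^ 2), b, μ / denom d ν ε b)

variable {D d μ ν ε b : ℝ}

lemma denom_pos (hd : 0 < d) (hν : 0 < ν) (hε : ε ∈ Ioo (-1) 1) (hb : 0 ≤ b) :
    0 < denom d ν ε b := by
  unfold denom
  have := mul_nonneg (mul_nonneg hd.le hb) (by linarith [hε.1] : (0 : ℝ) ≤ 1 + ε)
  have := mul_pos hν (by linarith [hε.2] : (0 : ℝ) < 1 - ε)
  linarith

lemma response_pos (hμ : 0 < μ) (hd : 0 < d) (hν : 0 < ν) (hε : ε ∈ Ioo (-1) 1) (hb : 0 < b) :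
    0 < response μ d ν ε b := by
  have : 0 < 1 + ε := by linarith [hε.1]
  exact div_pos (by positivity) (denom_pos hd hν hε hb.le)

lemma response_monotoneOn (hμ : 0 ≤ μ) (hd : 0 < d) (hν : 0 < ν) (hε : ε ∈ Ioo (-1) 1) :
    MonotoneOn (response μ d ν ε) (Ici 0) := by
  intro b hb b' hb' hbb'
  have : 0 < 1 + ε := by linarith [hε.1]
  have : 0 < 1 - ε := by linarith [hε.2]
  have : 0 ≤ b' - b := sub_nonneg.2 hbb'
  rw [response, response, div_le_div_iff₀ (denom_pos hd hν hε hb) (denom_pos hd hν hε hb'),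
    ← sub_nonneg]
  have cross : μ * d * b' * (1 + ε) * denom d ν ε b - μ * d * b * (1 + ε) * denom d ν ε b'
      = μ * d * (1 + ε) * ν * (1 - ε) * (b' - b) := by
    unfold denom
    ring
  rw [cross]
  positivity

lemma continuousOn_response (hd : 0 < d) (hν : 0 < ν) (hε : ε ∈ Ioo (-1) 1) :
    ContinuousOn (response μ d ν ε) (Ici 0) :=
  ContinuousOn.div (by fun_prop) (by unfold denom; fun_prop) fun _ hb =>
    (denom_pos hd hν hε hb).ne'

lemma abs_response_sub_response_zero_le (hμ : 0 ≤ μ) (hd : 0 < d) (hν : 0 < ν) (hε0 : 0 ≤ ε)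
    (hε1 : ε < 1) (hb : 0 ≤ b) :
    |response μ d ν ε b - response μ d ν 0 b| ≤ 2 * μ * ε := by
  have h1 := denom_pos hd hν ⟨by linarith, hε1⟩ hb
  have h0 : 0 < d * b + ν := by positivity
  have key : response μ d ν ε b - response μ d ν 0 b
      = 2 * μ * ε * (d * b * ν) / (denom d ν ε b * (d * b + ν)) := by
    unfold response
    have : denom d ν 0 b = d * b + ν := by simp [denom]
    rw [this]
    field_simp
    unfold denom
    ring
  have hle : d * b * ν ≤ denom d ν ε b * (d * b + ν) := by
    unfold denom
    have : 0 ≤ d * b := by positivity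
    nlinarith [mul_nonneg this hε0, mul_nonneg hν.le (sub_nonneg.2 hε1.le)]
  rw [key, abs_of_nonneg (by positivity), mul_div_assoc]
  exact mul_le_of_le_one_right (by positivity) ((div_le_one (by positivity)).2 hle)

lemma existsUnique_balance (hD : 0 < D) (hμ : 0 < μ) (hd : 0 < d) (hν : 0 < ν)
    (hε : ε ∈ Ioo (-1) 1) {q : ℝ} (hq : 0 < q) :
    ∃! b, 0 < b ∧ D * (q - b ^ 2) = response μ d ν ε b := by
  set g := fun b => D * b ^ 2 + response μ d ν ε b
  have hbal : ∀ b, D * (q - b ^ 2) = response μ d ν ε b ↔ g b = D * q := fun b => by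
    constructor <;> intro h <;> simp only [g] at * <;> linarith
  have hsq : StrictMonoOn (fun b : ℝ => D * b ^ 2) (Ici 0) := fun x hx _ _ hxy =>
    mul_lt_mul_of_pos_left (pow_lt_pow_left₀ hxy hx two_ne_zero) hD
  have hg : StrictMonoOn g (Ici 0) := hsq.add_monotone (response_monotoneOn hμ.le hd hν hε)
  have hg0 : g 0 = 0 := by simp [g, response]
  obtain ⟨b, hb, hgb⟩ : D * q ∈ g '' Icc 0 √q := by
    refine intermediate_value_Icc (Real.sqrt_nonneg q) (ContinuousOn.mono ?_ Icc_subset_Ici_self)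
      ⟨by rw [hg0]; positivity, ?_⟩
    · exact (continuous_const.mul (continuous_pow 2)).continuousOn.add
        (continuousOn_response hd hν hε)
    · have := (response_pos hμ hd hν hε (Real.sqrt_pos.2 hq)).le
      simp only [g, Real.sq_sqrt hq.le]
      linarith
  have hb0 : 0 < b := hb.1.lt_of_ne (by rintro rfl; exact (mul_pos hD hq).ne (hg0 ▸ hgb))
  refine ⟨b, ⟨hb0, (hbal b).2 hgb⟩, fun b' ⟨hb', hb'bal⟩ => ?_⟩
  exact hg.injOn (mem_Ici.2 hb'.le) (mem_Ici.2 hb.1) (((hbal b').1 hb'bal).trans hgb.symm)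

variable {ζ : ℝ} {p : ℝ × ℝ × ℝ}

lemma IsSolution.balance (h : IsSolution D d μ ν ζ ε p) :
    D * (ζ / d - p.2.1 ^ 2) = response μ d ν ε p.2.1 := by
  rw [← h.2.1, ← h.2.2.1]
  ring

lemma IsSolution.eq_solutionOf (h : IsSolution D d μ ν ζ ε p) :
    p = solutionOf d μ ν ζ ε p.2.1 := by
  obtain ⟨⟨ha, -, -⟩, -, hsum, hγ⟩ := h
  refine Prod.ext ?_ (Prod.ext rfl hγ)
  rw [solutionOf, ← hsum, add_sub_cancel_right, Real.sqrt_sq ha.le]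

lemma isSolution_solutionOf (hD : 0 < D) (hμ : 0 < μ) (hd : 0 < d) (hν : 0 < ν)
    (hε : ε ∈ Ioo (-1) 1) (hb : 0 < b) (hbal : D * (ζ / d - b ^ 2) = response μ d ν ε b) :
    IsSolution D d μ ν ζ ε (solutionOf d μ ν ζ ε b) := by
  have ha : 0 < ζ / d - b ^ 2 :=
    (mul_pos_iff_of_pos_left hD).1 (hbal ▸ response_pos hμ hd hν hε hb)
  refine ⟨⟨Real.sqrt_pos.2 ha, hb, div_pos hμ (denom_pos hd hν hε hb.le)⟩, ?_, ?_, rfl⟩ <;>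
    simp only [solutionOf, Real.sq_sqrt ha.le]
  · exact hbal
  · ring

theorem existsUnique_isSolution (hD : 0 < D) (hμ : 0 < μ) (hd : 0 < d) (hν : 0 < ν)
    (hζ : 0 < ζ) (hε : ε ∈ Ioo (-1) 1) : ∃! p, IsSolution D d μ ν ζ ε p := by
  obtain ⟨b, ⟨hb, hbal⟩, huniq⟩ := existsUnique_balance hD hμ hd hν hε (div_pos hζ hd)
  refine ⟨_, isSolution_solutionOf hD hμ hd hν hε hb hbal, fun p hp => ?_⟩
  rw [hp.eq_solutionOf, huniq _ ⟨hp.1.2.1, hp.balance⟩]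

lemma mul_abs_sub_le_of_balance (hD : 0 < D) (hμ : 0 ≤ μ) (hd : 0 < d) (hν : 0 < ν)
    (hε0 : 0 ≤ ε) (hε1 : ε < 1) {q q₀ P : ℝ} (hb : 0 < b) (hP : 0 < P)
    (hbal : D * (q - b ^ 2) = response μ d ν ε b)
    (hbal₀ : D * (q₀ - P ^ 2) = response μ d ν 0 P) :
    D * P * |b - P| ≤ D * |q - q₀| + 2 * μ * ε := by
  have hmono := response_monotoneOn hμ hd hν (show (0 : ℝ) ∈ Ioo (-1) 1 by norm_num)
  have hpert := abs_le.1 (abs_response_sub_response_zero_le hμ hd hν hε0 hε1 hb.le)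
  have hq := mul_le_mul_of_nonneg_left (le_abs_self (q - q₀)) hD.le
  have hq' := mul_le_mul_of_nonneg_left (neg_abs_le (q - q₀)) hD.le
  -- `D (b² - P²)` and `φ_0 b - φ_0 P` both have the sign of `b - P`, so they cannot cancel.
  rcases le_total b P with hbP | hPb
  · have := hmono (mem_Ici.2 hb.le) (mem_Ici.2 hP.le) hbP
    have := mul_nonneg (mul_nonneg hD.le hb.le) (sub_nonneg.2 hbP)
    rw [abs_of_nonpos (sub_nonpos.2 hbP)]
    linarith
  · have := hmono (mem_Ici.2 hP.le) (mem_Ici.2 hb.le) hPb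
    have := mul_nonneg (mul_nonneg hD.le hb.le) (sub_nonneg.2 hPb)
    rw [abs_of_nonneg (sub_nonneg.2 hPb)]
    linarith

lemma continuousAt_solutionOf {m P : ℝ} (hden : denom d ν 0 P ≠ 0) :
    ContinuousAt (fun x : ℝ × ℝ × ℝ => solutionOf d μ ν x.1 x.2.1 x.2.2) (m, 0, P) := by
  unfold solutionOf denom
  exact (by fun_prop : Continuous fun x : ℝ × ℝ × ℝ => √(x.1 / d - x.2.2 ^ 2)).continuousAt.prodMk
    (continuousAt_snd.snd.prodMk (continuousAt_const.div (by fun_prop) hden))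

theorem IsSolution.exists_forall_dist_lt (hD : 0 < D) (hμ : 0 < μ) (hd : 0 < d) (hν : 0 < ν)
    {m : ℝ} {pstar : ℝ × ℝ × ℝ} (hstar : IsSolution D d μ ν m 0 pstar) {η : ℝ} (hη : 0 < η) :
    ∃ δ > 0, ∀ ζ ε : ℝ, |ζ - m| < δ → 0 ≤ ε → ε < δ → ε < 1 →
      ∀ p, IsSolution D d μ ν ζ ε p → dist p pstar < η := by
  set P := pstar.2.1
  have hP : 0 < P := hstar.1.2.1
  obtain ⟨δ₁, hδ₁, hδ₁η⟩ := Metric.continuousAt_iff.1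
    (continuousAt_solutionOf (μ := μ) (m := m) (denom_pos hd hν (by norm_num) hP.le).ne') η hη
  set C := D / d + 2 * μ
  have hC : 0 < C := by positivity
  refine ⟨min δ₁ (D * P * δ₁ / C), by positivity, fun ζ ε hζm hε0 hεδ hε1 p hp => ?_⟩
  set b := p.2.1
  have hδ := (le_div_iff₀' hC).1 (min_le_right δ₁ (D * P * δ₁ / C))
  have hest := mul_abs_sub_le_of_balance hD hμ.le hd hν hε0 hε1 hp.1.2.1 hP hp.balance
    hstar.balance
  rw [← sub_div, abs_div, abs_of_pos hd, ← mul_comm_div] at hest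
  have hbP : D * P * |b - P| < D * P * δ₁ := calc
    D * P * |b - P| ≤ D / d * |ζ - m| + 2 * μ * ε := hest
    _ < C * min δ₁ (D * P * δ₁ / C) := by
      have := mul_lt_mul_of_pos_left hζm (div_pos hD hd)
      have := mul_le_mul_of_nonneg_left hεδ.le (by positivity : (0 : ℝ) ≤ 2 * μ)
      rw [add_mul]
      linarith
    _ ≤ D * P * δ₁ := hδ
  rw [hp.eq_solutionOf, hstar.eq_solutionOf]
  refine hδ₁η (x := (ζ, ε, b)) ?_
  simp only [Prod.dist_eq, Real.dist_eq, sub_zero, abs_of_nonneg hε0, max_lt_iff]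
  exact ⟨hζm.trans_le (min_le_left _ _), hεδ.trans_le (min_le_left _ _),
    lt_of_mul_lt_mul_left hbP (by positivity)⟩

end PerturbedSystem

open PerturbedSystem in
/-- For `ζ > 0` and `ε ∈ (0,1)`, the perturbed algebraic
system `Da² = μdb(1+ε)/(db(1+ε)+ν(1−ε))`, `a² + b² = ζ/d`,
`γ = μ/(db(1+ε)+ν(1−ε))` admits exactly one positive solution
`(a_*^{ζ,ε}, b_*^{ζ,ε}, γ_*^{ζ,ε})`, and as `(ζ, ε) → (m, 0)` this solution
converges to the unique positive solution of the unperturbed system with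
`a² + b² = m/d`. -/
theorem perturbed_algebraic_system
    (D d μ ν : ℝ)
    (hD : 0 < D) (hd : 0 < d) (hμ : 0 < μ) (hν : 0 < ν) :
    (∀ ζ > (0:ℝ), ∀ ε ∈ Set.Ioo (0:ℝ) 1,
      ∃! p : ℝ × ℝ × ℝ,
        (0 < p.1 ∧ 0 < p.2.1 ∧ 0 < p.2.2) ∧
        D * p.1 ^ 2
          = μ * d * p.2.1 * (1 + ε) / (d * p.2.1 * (1 + ε) + ν * (1 - ε)) ∧
        p.1 ^ 2 + p.2.1 ^ 2 = ζ / d ∧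
        p.2.2 = μ / (d * p.2.1 * (1 + ε) + ν * (1 - ε))) ∧
    (∀ m > (0:ℝ), ∀ pstar : ℝ × ℝ × ℝ,
      ((0 < pstar.1 ∧ 0 < pstar.2.1 ∧ 0 < pstar.2.2) ∧
        D * pstar.1 ^ 2 = μ * d * pstar.2.1 / (d * pstar.2.1 + ν) ∧
        pstar.1 ^ 2 + pstar.2.1 ^ 2 = m / d ∧
        pstar.2.2 = μ / (d * pstar.2.1 + ν)) →
      ∀ η > (0:ℝ), ∃ δ > (0:ℝ), ∀ ζ ε : ℝ,
        0 < ζ → |ζ - m| < δ → 0 < ε → ε < δ → ε < 1 →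
        ∀ p : ℝ × ℝ × ℝ,
          ((0 < p.1 ∧ 0 < p.2.1 ∧ 0 < p.2.2) ∧
            D * p.1 ^ 2
              = μ * d * p.2.1 * (1 + ε) / (d * p.2.1 * (1 + ε) + ν * (1 - ε)) ∧
            p.1 ^ 2 + p.2.1 ^ 2 = ζ / d ∧
            p.2.2 = μ / (d * p.2.1 * (1 + ε) + ν * (1 - ε))) →
          dist p pstar < η) := by
  refine ⟨fun ζ hζ ε hε => existsUnique_isSolution hD hμ hd hν hζ ⟨by linarith [hε.1], hε.2⟩,
    fun m _ pstar hstar η hη => ?_⟩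
  have hstar : IsSolution D d μ ν m 0 pstar := by simpa [IsSolution, response, denom] using hstar
  obtain ⟨δ, hδ, hclose⟩ := hstar.exists_forall_dist_lt hD hμ hd hν hη
  exact ⟨δ, hδ, fun ζ ε _ hζm hε0 hεδ hε1 => hclose ζ ε hζm hε0.le hεδ hε1⟩
end
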